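/- For every integer l ≥ 1, the probability under the measure ρ_l (the law of a critical geometric(1/2) Galton–Watson tree whose root has label l and where each non-root vertex's label differs from its parent's by an element of {-1,0,1} chosen uniformly and independently) that the minimal label V_* of the tree is strictly positive equals l(l+3)/((l+1)(l+2)). -/

import Mathlib

open scoped ENNReal

/-- Labeled plane trees: each node carries an integer label and an ordered list of subtrees. -/
inductive LTree where
  | node : ℤ → List LTree → LTree
deriving Inhabited

namespace LTree

/-- The label of the root. -/
def label : LTree → ℤ
  | node l _ => l

mutual
  /-- Number of edges of a labeled tree. -/
  def edges : LTree → ℕ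
    | node _ cs => edgesL cs
  def edgesL : List LTree → ℕ
    | [] => 0
    | t :: ts => edges t + 1 + edgesL ts
end

mutual
  /-- Minimal label in the tree. -/
  def minLabel : LTree → ℤ
    | node l cs => minLabelL cs l
  def minLabelL : List LTree → ℤ → ℤ
    | [], m => m
    | t :: ts, m => minLabelL ts (min m (minLabel t))
end

/-- A labeled tree is valid if the labels of any two neighbouring vertices
differ by at most one in absolute value. -/
inductive Valid : LTree → Prop where
  | node (l : ℤ) (cs : List LTree) :
      (∀ c ∈ cs, |label c - l| ≤ 1) → (∀ c ∈ cs, Valid c) → Valid (.node l cs)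

end LTree

/-- The measure `ρ_l`: the law of a Galton–Watson tree with geometric(1/2) offspring
distribution, root label `l`, and i.i.d. uniform `{-1,0,1}` label increments along edges.
It is the atomic measure giving mass `(1/2)·12^{-n}` to each valid labeled tree with `n`
edges and root label `l`. -/
noncomputable def rho (l : ℤ) (A : Set LTree) : ℝ≥0∞ :=
  ∑' θ : LTree,
    Set.indicator ({θ : LTree | θ.label = l ∧ θ.Valid} ∩ A)
      (fun θ => (2 : ℝ≥0∞)⁻¹ * (12 : ℝ≥0∞)⁻¹ ^ θ.edges) θ


namespace RhoAux

open LTree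

lemma tsum_iSup_mono {α : Type*} (f : ℕ → α → ℝ≥0∞) (hf : ∀ x, Monotone fun n => f n x) :
    ∑' x, ⨆ n, f n x = ⨆ n, ∑' x, f n x := by
  apply le_antisymm
  · rw [ENNReal.tsum_eq_iSup_sum]
    apply iSup_le; intro s
    rw [ENNReal.finsetSum_iSup_of_monotone (fun x => hf x)]
    exact iSup_mono fun n => ENNReal.sum_le_tsum s
  · exact iSup_le fun n => ENNReal.tsum_le_tsum fun x => le_iSup (fun n => f n x) n

lemma tsum_pi_prod {α : Type*} (h : α → ℝ≥0∞) (n : ℕ) :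
    ∑' v : Fin n → α, ∏ i, h (v i) = (∑' a, h a) ^ n := by
  induction n with
  | zero =>
      rw [tsum_eq_single (fun i => i.elim0) (fun v hv => absurd (Subsingleton.elim v _) hv)]
      simp
  | succ n ih =>
      rw [← (Fin.consEquiv (fun _ : Fin (n+1) => α)).tsum_eq]
      rw [ENNReal.tsum_prod']
      have : ∀ (a : α) (v : Fin n → α),
          (∏ i, h ((Fin.consEquiv (fun _ : Fin (n+1) => α)) (a, v) i)) = h a * ∏ i, h (v i) := by
        intro a v
        rw [Fin.prod_univ_succ]
        simp [Fin.consEquiv]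
      simp only [this]
      simp only [ENNReal.tsum_mul_left, ENNReal.tsum_mul_right]
      rw [ih, pow_succ, mul_comm]

lemma tsum_list_prod {α : Type*} (h : α → ℝ≥0∞) :
    ∑' cs : List α, ((cs.map h).prod) = (1 - ∑' a, h a)⁻¹ := by
  rw [← List.equivSigmaTuple.symm.tsum_eq (f := fun cs : List α => (cs.map h).prod)]
  rw [ENNReal.tsum_sigma']
  have : ∀ (n : ℕ) (v : Fin n → α),
      ((List.equivSigmaTuple.symm ⟨n, v⟩).map h).prod = ∏ i, h (v i) := by
    intro n v
    simp [List.equivSigmaTuple, List.map_ofFn, List.prod_ofFn]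
  calc ∑' (n : ℕ) (v : Fin n → α), ((List.equivSigmaTuple.symm ⟨n, v⟩).map h).prod
      = ∑' (n : ℕ), (∑' a, h a) ^ n := by
        refine tsum_congr fun n => ?_
        rw [tsum_congr (this n), tsum_pi_prod]
    _ = (1 - ∑' a, h a)⁻¹ := ENNReal.tsum_geometric _


noncomputable def E (θ : LTree) : ℝ≥0∞ := (12 : ℝ≥0∞)⁻¹ ^ θ.edges

noncomputable def W (P : LTree → Prop) (l : ℤ) : ℝ≥0∞ :=
  ∑' θ : LTree, Set.indicator {θ : LTree | θ.label = l ∧ θ.Valid ∧ P θ} E θ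

def treeEquiv : LTree ≃ ℤ × List LTree where
  toFun θ := match θ with | .node l cs => (l, cs)
  invFun p := .node p.1 p.2
  left_inv θ := by cases θ; rfl
  right_inv p := rfl

lemma valid_node_iff (m : ℤ) (cs : List LTree) :
    Valid (.node m cs) ↔ (∀ c ∈ cs, |c.label - m| ≤ 1) ∧ (∀ c ∈ cs, c.Valid) := by
  constructor
  · rintro ⟨_, _, h1, h2⟩; exact ⟨h1, h2⟩
  · rintro ⟨h1, h2⟩; exact Valid.node m cs h1 h2

lemma minLabelL_pos (cs : List LTree) (m : ℤ) :
    0 < minLabelL cs m ↔ 0 < m ∧ ∀ c ∈ cs, 0 < c.minLabel := by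
  induction cs generalizing m with
  | nil => simp [minLabelL]
  | cons t ts ih =>
      simp only [minLabelL, ih, lt_min_iff, List.mem_cons]
      constructor
      · rintro ⟨⟨h1, h2⟩, h3⟩
        exact ⟨h1, fun c hc => by rcases hc with rfl | hc; exact h2; exact h3 c hc⟩
      · rintro ⟨h1, h2⟩
        exact ⟨⟨h1, h2 t (Or.inl rfl)⟩, fun c hc => h2 c (Or.inr hc)⟩

lemma minLabel_node_pos (m : ℤ) (cs : List LTree) :
    0 < (LTree.node m cs).minLabel ↔ 0 < m ∧ ∀ c ∈ cs, 0 < c.minLabel := by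
  rw [show (LTree.node m cs).minLabel = minLabelL cs m from rfl, minLabelL_pos]

end RhoAux

namespace RhoAux2
open LTree RhoAux
open scoped Classical

lemma prod_indicator (P' : LTree → Prop) (l : ℤ) (cs : List LTree) :
    ((cs.map (fun c => Set.indicator {c : LTree | |c.label - l| ≤ 1 ∧ c.Valid ∧ P' c}
        (fun c => (12:ℝ≥0∞)⁻¹ ^ (c.edges + 1)) c)).prod)
      = if (∀ c ∈ cs, |c.label - l| ≤ 1 ∧ c.Valid ∧ P' c)
          then (12:ℝ≥0∞)⁻¹ ^ (edgesL cs) else 0 := by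
  induction cs with
  | nil => simp [edgesL]
  | cons t ts ih =>
      simp only [List.map_cons, List.prod_cons, ih, List.forall_mem_cons]
      rw [Set.indicator_apply]
      simp only [Set.mem_setOf_eq]
      by_cases ht : |t.label - l| ≤ 1 ∧ t.Valid ∧ P' t
      · by_cases hts : ∀ c ∈ ts, |c.label - l| ≤ 1 ∧ c.Valid ∧ P' c
        · rw [if_pos ht, if_pos hts, if_pos (⟨ht, hts⟩ : _ ∧ _), ← pow_add]
          rfl
        · rw [if_pos ht, if_neg hts, mul_zero, if_neg]
          rintro ⟨-, h2⟩
          exact hts h2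
      · rw [if_neg ht, zero_mul, if_neg]
        rintro ⟨h1, -⟩
        exact ht h1

lemma hfun_eq (P' : LTree → Prop) (l : ℤ) (c : LTree) :
    Set.indicator {c : LTree | |c.label - l| ≤ 1 ∧ c.Valid ∧ P' c}
        (fun c => (12:ℝ≥0∞)⁻¹ ^ (c.edges + 1)) c
      = (12:ℝ≥0∞)⁻¹ *
        (Set.indicator {c : LTree | c.label = l - 1 ∧ c.Valid ∧ P' c} E c
         + Set.indicator {c : LTree | c.label = l ∧ c.Valid ∧ P' c} E c
         + Set.indicator {c : LTree | c.label = l + 1 ∧ c.Valid ∧ P' c} E c) := by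
  by_cases hV : c.Valid
  case neg => simp [Set.indicator_apply, hV]
  by_cases hp : P' c
  case neg => simp [Set.indicator_apply, hp]
  simp only [Set.indicator_apply, Set.mem_setOf_eq, hV, hp, and_true]
  have habs : |c.label - l| ≤ 1 ↔ (c.label = l - 1 ∨ c.label = l ∨ c.label = l + 1) := by
    rw [abs_le]; omega
  simp only [habs]
  have n1 : l - 1 ≠ l := by omega
  have n2 : l - 1 ≠ l + 1 := by omega
  have n3 : l ≠ l - 1 := by omega
  have n4 : l ≠ l + 1 := by omega
  have n5 : l + 1 ≠ l - 1 := by omega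
  have n6 : l + 1 ≠ l := by omega
  by_cases h1 : c.label = l - 1
  · have e2 : c.label ≠ l := by omega
    have e3 : c.label ≠ l + 1 := by omega
    simp [h1, e2, e3, n1, n2, E, pow_succ, mul_comm]
  · by_cases h2 : c.label = l
    · have e3 : c.label ≠ l + 1 := by omega
      simp [h1, h2, e3, n3, n4, E, pow_succ, mul_comm]
    · by_cases h3 : c.label = l + 1
      · simp [h1, h2, h3, n5, n6, E, pow_succ, mul_comm]
      · simp [h1, h2, h3]

lemma W_eq (P P' : LTree → Prop) (Q : ℤ → Prop)
    (hP : ∀ (m : ℤ) (cs : List LTree), P (.node m cs) ↔ (Q m ∧ ∀ c ∈ cs, P' c)) (l : ℤ) :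
    W P l = if Q l then (1 - (12:ℝ≥0∞)⁻¹ * (W P' (l-1) + W P' l + W P' (l+1)))⁻¹ else 0 := by
  set h : LTree → ℝ≥0∞ := fun c => Set.indicator {c : LTree | |c.label - l| ≤ 1 ∧ c.Valid ∧ P' c}
      (fun c => (12:ℝ≥0∞)⁻¹ ^ (c.edges + 1)) c with hh
  have key : ∀ cs : List LTree,
      Set.indicator {θ : LTree | θ.label = l ∧ θ.Valid ∧ P θ} E (.node l cs)
        = (if Q l then 1 else 0) * ((cs.map h).prod) := by
    intro cs
    rw [hh, prod_indicator, Set.indicator_apply]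
    by_cases hQ : Q l
    · by_cases hcs : ∀ c ∈ cs, |c.label - l| ≤ 1 ∧ c.Valid ∧ P' c
      · rw [if_pos, if_pos hcs, if_pos hQ, one_mul]
        · rfl
        · refine ⟨rfl, (valid_node_iff l cs).2 ⟨fun c hc => (hcs c hc).1,
            fun c hc => (hcs c hc).2.1⟩, (hP l cs).2 ⟨hQ, fun c hc => (hcs c hc).2.2⟩⟩
      · rw [if_neg, if_neg hcs, mul_zero]
        · rintro ⟨-, hV, hPn⟩
          apply hcs
          intro c hc
          have hv := (valid_node_iff l cs).1 hV
          have hpn := ((hP l cs).1 hPn).2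
          exact ⟨hv.1 c hc, hv.2 c hc, hpn c hc⟩
    · rw [if_neg, if_neg hQ, zero_mul]
      · rintro ⟨-, -, hPn⟩
        exact hQ (((hP l cs).1 hPn).1)
  have e1 : W P l = ∑' cs : List LTree,
      Set.indicator {θ : LTree | θ.label = l ∧ θ.Valid ∧ P θ} E (.node l cs) := by
    rw [W, ← treeEquiv.symm.tsum_eq, ENNReal.tsum_prod']
    rw [tsum_eq_single l]
    · rfl
    · intro m hm
      convert tsum_zero with cs
      refine Set.indicator_of_notMem ?_ _
      rintro ⟨hlab, -, -⟩
      exact hm hlab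
  rw [e1, tsum_congr key, ENNReal.tsum_mul_left, tsum_list_prod]
  have hsum : ∑' c, h c = (12:ℝ≥0∞)⁻¹ * (W P' (l-1) + W P' l + W P' (l+1)) := by
    rw [hh]
    rw [tsum_congr (hfun_eq P' l), ENNReal.tsum_mul_left]
    congr 1
    rw [ENNReal.tsum_add, ENNReal.tsum_add]
    rfl
  rw [hsum]
  by_cases hQ : Q l <;> simp [hQ]

end RhoAux2

namespace RhoAux3
open LTree RhoAux RhoAux2
open scoped Classical

mutual
  def height : LTree → ℕ
    | .node _ cs => heightL cs
  def heightL : List LTree → ℕ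
    | [] => 0
    | t :: ts => max (height t + 1) (heightL ts)
end

lemma heightL_le (n : ℕ) (cs : List LTree) :
    heightL cs ≤ n ↔ ∀ c ∈ cs, height c + 1 ≤ n := by
  induction cs with
  | nil => simp [heightL]
  | cons t ts ih => simp [heightL, max_le_iff, ih, List.forall_mem_cons]

def Pn (n : ℕ) (θ : LTree) : Prop := 0 < θ.minLabel ∧ height θ ≤ n

lemma Pn_zero_iff (m : ℤ) (cs : List LTree) :
    Pn 0 (.node m cs) ↔ (0 < m ∧ ∀ c ∈ cs, False) := by
  unfold Pn
  rw [minLabel_node_pos, show height (LTree.node m cs) = heightL cs from rfl, heightL_le]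
  constructor
  · rintro ⟨⟨h1, _⟩, h3⟩
    exact ⟨h1, fun c hc => by have := h3 c hc; omega⟩
  · rintro ⟨h1, h2⟩
    exact ⟨⟨h1, fun c hc => (h2 c hc).elim⟩, fun c hc => (h2 c hc).elim⟩

lemma Pn_succ_iff (n : ℕ) (m : ℤ) (cs : List LTree) :
    Pn (n+1) (.node m cs) ↔ (0 < m ∧ ∀ c ∈ cs, Pn n c) := by
  unfold Pn
  rw [minLabel_node_pos, show height (LTree.node m cs) = heightL cs from rfl, heightL_le]
  constructor
  · rintro ⟨⟨h1, h2⟩, h3⟩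
    exact ⟨h1, fun c hc => ⟨h2 c hc, by have := h3 c hc; omega⟩⟩
  · rintro ⟨h1, h2⟩
    exact ⟨⟨h1, fun c hc => (h2 c hc).1⟩, fun c hc => by have := (h2 c hc).2; omega⟩

noncomputable def u (l : ℤ) : ℝ≥0∞ := W (fun θ => 0 < θ.minLabel) l
noncomputable def un (n : ℕ) (l : ℤ) : ℝ≥0∞ := W (Pn n) l

lemma W_false (m : ℤ) : W (fun _ => False) m = 0 := by
  rw [W]
  convert tsum_zero with θ
  exact Set.indicator_of_notMem (fun hm => hm.2.2) _

lemma u_eq_pos {l : ℤ} (h : 0 < l) :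
    u l = (1 - (12:ℝ≥0∞)⁻¹ * (u (l-1) + u l + u (l+1)))⁻¹ := by
  have := W_eq (fun θ => 0 < θ.minLabel) (fun θ => 0 < θ.minLabel) (fun m => 0 < m) (fun m cs => minLabel_node_pos m cs) l
  rw [if_pos h] at this
  exact this

lemma u_eq_nonpos {l : ℤ} (h : ¬ 0 < l) : u l = 0 := by
  have := W_eq (fun θ => 0 < θ.minLabel) (fun θ => 0 < θ.minLabel) (fun m => 0 < m) (fun m cs => minLabel_node_pos m cs) l
  rw [if_neg h] at this
  exact this

lemma un_zero (l : ℤ) : un 0 l = if 0 < l then 1 else 0 := by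
  have := W_eq (Pn 0) (fun _ => False) (fun m => 0 < m) Pn_zero_iff l
  rw [un, this]
  by_cases h : 0 < l <;> simp [h, W_false]

lemma un_succ_pos (n : ℕ) {l : ℤ} (h : 0 < l) :
    un (n+1) l = (1 - (12:ℝ≥0∞)⁻¹ * (un n (l-1) + un n l + un n (l+1)))⁻¹ := by
  have := W_eq (Pn (n+1)) (Pn n) (fun m => 0 < m) (Pn_succ_iff n) l
  rw [if_pos h] at this
  exact this

lemma un_succ_nonpos (n : ℕ) {l : ℤ} (h : ¬ 0 < l) : un (n+1) l = 0 := by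
  have := W_eq (Pn (n+1)) (Pn n) (fun m => 0 < m) (Pn_succ_iff n) l
  rw [if_neg h] at this
  exact this

lemma W_mono {P P'' : LTree → Prop} (h : ∀ θ, P θ → P'' θ) (l : ℤ) : W P l ≤ W P'' l := by
  refine ENNReal.tsum_le_tsum fun θ =>
    Set.indicator_le_indicator_of_subset ?_ (fun _ => zero_le) θ
  intro θ' hθ'
  exact ⟨hθ'.1, hθ'.2.1, h θ' hθ'.2.2⟩

lemma u_eq_iSup (l : ℤ) : u l = ⨆ n, un n l := by
  have hpt : ∀ θ : LTree,
      Set.indicator {θ : LTree | θ.label = l ∧ θ.Valid ∧ 0 < θ.minLabel} E θ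
        = ⨆ n, Set.indicator {θ : LTree | θ.label = l ∧ θ.Valid ∧ Pn n θ} E θ := by
    intro θ
    apply le_antisymm
    · by_cases hθ : θ.label = l ∧ θ.Valid ∧ 0 < θ.minLabel
      · refine le_trans ?_ (le_iSup _ (height θ))
        rw [Set.indicator_apply, Set.indicator_apply]
        simp only [Set.mem_setOf_eq]
        rw [if_pos hθ, if_pos (⟨hθ.1, hθ.2.1, hθ.2.2, le_refl _⟩ :
          θ.label = l ∧ θ.Valid ∧ Pn (height θ) θ)]
      · rw [Set.indicator_apply]
        simp only [Set.mem_setOf_eq]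
        rw [if_neg hθ]
        exact zero_le
    · refine iSup_le fun n => Set.indicator_le_indicator_of_subset ?_ (fun _ => zero_le) θ
      intro x hx
      exact ⟨hx.1, hx.2.1, hx.2.2.1⟩
  rw [u, W, tsum_congr hpt]
  rw [tsum_iSup_mono]
  · rfl
  · intro θ
    apply monotone_nat_of_le_succ
    intro n
    refine Set.indicator_le_indicator_of_subset ?_ (fun _ => zero_le) θ
    intro x hx
    exact ⟨hx.1, hx.2.1, hx.2.2.1, hx.2.2.2.trans (Nat.le_succ n)⟩

end RhoAux3

namespace RhoAux4
open LTree RhoAux RhoAux2 RhoAux3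
open scoped Classical

noncomputable def g (m : ℤ) : ℝ := if 0 < m then 2*(m:ℝ)*(m+3)/((m+1)*(m+2)) else 0

lemma g_nonneg (m : ℤ) : 0 ≤ g m := by
  unfold g; split
  · next h =>
      have hm : (0:ℝ) < (m:ℝ) := by exact_mod_cast h
      positivity
  · exact le_refl 0

lemma g_le_two (m : ℤ) : g m ≤ 2 := by
  unfold g; split
  · next h =>
      have hm : (1:ℝ) ≤ (m:ℝ) := by exact_mod_cast h
      rw [div_le_iff₀ (by nlinarith)]
      nlinarith
  · norm_num

lemma g_one_le {m : ℤ} (h : 0 < m) : 1 ≤ g m := by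
  unfold g; rw [if_pos h]
  have hm : (1:ℝ) ≤ (m:ℝ) := by exact_mod_cast h
  rw [le_div_iff₀ (by nlinarith)]
  nlinarith

lemma g_formula {m : ℤ} (h : 0 ≤ m) : g m = 2*(m:ℝ)*((m:ℝ)+3)/(((m:ℝ)+1)*((m:ℝ)+2)) := by
  unfold g; split
  · rfl
  · next h' =>
      have : m = 0 := by omega
      subst this
      norm_num

lemma g_fp' {l : ℤ} (h : 1 ≤ l) :
    g l * (12 - (g (l-1) + g l + g (l+1))) = 12 := by
  rw [g_formula (by omega : (0:ℤ) ≤ l - 1), g_formula (by omega : (0:ℤ) ≤ l),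
    g_formula (by omega : (0:ℤ) ≤ l + 1)]
  have hx : (1:ℝ) ≤ (l:ℝ) := by exact_mod_cast h
  push_cast
  have d1 : (l:ℝ) ≠ 0 := by nlinarith
  have d2 : (l:ℝ) + 1 ≠ 0 := by nlinarith
  have d3 : (l:ℝ) + 2 ≠ 0 := by nlinarith
  have d4 : (l:ℝ) + 3 ≠ 0 := by nlinarith
  have e1 : (l:ℝ) - 1 + 1 = (l:ℝ) := by ring
  have e2 : (l:ℝ) - 1 + 2 = (l:ℝ) + 1 := by ring
  have e3 : (l:ℝ) + 1 + 1 = (l:ℝ) + 2 := by ring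
  have e4 : (l:ℝ) + 1 + 2 = (l:ℝ) + 3 := by ring
  rw [e1, e2, e3, e4]
  field_simp
  ring

noncomputable def uf (m : ℤ) : ℝ≥0∞ := ENNReal.ofReal (g m)

lemma uf_fp {l : ℤ} (h : 1 ≤ l) :
    (1 - (12:ℝ≥0∞)⁻¹ * (uf (l-1) + uf l + uf (l+1)))⁻¹ = uf l := by
  set s : ℝ := g (l-1) + g l + g (l+1) with hs
  have hs6 : s ≤ 6 := by
    have := g_le_two (l-1); have := g_le_two l; have := g_le_two (l+1)
    simp only [hs]; linarith
  have hs0 : 0 ≤ s := by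
    have := g_nonneg (l-1); have := g_nonneg l; have := g_nonneg (l+1)
    simp only [hs]; linarith
  have e1 : uf (l-1) + uf l + uf (l+1) = ENNReal.ofReal s := by
    rw [hs, ENNReal.ofReal_add (add_nonneg (g_nonneg _) (g_nonneg _)) (g_nonneg _),
      ENNReal.ofReal_add (g_nonneg _) (g_nonneg _)]
    rfl
  rw [e1]
  have h12 : (12:ℝ≥0∞)⁻¹ = ENNReal.ofReal (12:ℝ)⁻¹ := by
    rw [ENNReal.ofReal_inv_of_pos (by norm_num)]
    norm_num
  rw [h12, ← ENNReal.ofReal_mul (by norm_num)]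
  rw [← ENNReal.ofReal_one, ← ENNReal.ofReal_sub _ (by positivity)]
  have hy : (0:ℝ) < 1 - (12:ℝ)⁻¹ * s := by nlinarith
  rw [← ENNReal.ofReal_inv_of_pos hy]
  congr 1
  have hgl := g_fp' h
  have : (1 - (12:ℝ)⁻¹ * s) * g l = 1 := by
    simp only [hs] at *
    linear_combination (1/12) * hgl
  exact inv_eq_of_mul_eq_one_right this

lemma un_le_uf : ∀ n (l : ℤ), un n l ≤ uf l := by
  intro n
  induction n with
  | zero =>
      intro l
      rw [un_zero]
      split
      · next h =>
          calc (1:ℝ≥0∞) = ENNReal.ofReal 1 := by norm_num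
          _ ≤ uf l := ENNReal.ofReal_le_ofReal (g_one_le h)
      · exact zero_le
  | succ n ih =>
      intro l
      by_cases h : 0 < l
      · rw [un_succ_pos n h, ← uf_fp h]
        apply ENNReal.inv_le_inv'
        apply tsub_le_tsub_left
        apply mul_le_mul_right
        exact add_le_add (add_le_add (ih _) (ih _)) (ih _)
      · rw [un_succ_nonpos n h]; exact zero_le

lemma u_le_uf (l : ℤ) : u l ≤ uf l := by
  rw [u_eq_iSup]
  exact iSup_le fun n => un_le_uf n l

lemma u_ne_top (l : ℤ) : u l ≠ ⊤ :=
  ((u_le_uf l).trans_lt ENNReal.ofReal_lt_top).ne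

noncomputable def v (m : ℤ) : ℝ := (u m).toReal

lemma v_nonneg (m : ℤ) : 0 ≤ v m := ENNReal.toReal_nonneg

lemma v_le_g (m : ℤ) : v m ≤ g m :=
  ENNReal.toReal_le_of_le_ofReal (g_nonneg m) (u_le_uf m)

lemma v_fp {l : ℤ} (h : 0 < l) :
    v l * (12 - (v (l-1) + v l + v (l+1))) = 12 := by
  have hu := u_eq_pos h
  set S : ℝ≥0∞ := u (l-1) + u l + u (l+1) with hS
  have hSne : S ≠ ⊤ := by
    simp only [hS]
    exact ENNReal.add_ne_top.2 ⟨ENNReal.add_ne_top.2 ⟨u_ne_top _, u_ne_top _⟩, u_ne_top _⟩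
  have hne0 : (1 : ℝ≥0∞) - 12⁻¹ * S ≠ 0 := by
    intro h0
    rw [h0, ENNReal.inv_zero] at hu
    exact u_ne_top l hu
  have hlt : (12:ℝ≥0∞)⁻¹ * S ≤ 1 := by
    by_contra hge
    push_neg at hge
    exact hne0 (tsub_eq_zero_of_le hge.le)
  have hTne : (1:ℝ≥0∞) - 12⁻¹ * S ≠ ⊤ :=
    (tsub_le_self.trans_lt ENNReal.one_lt_top).ne
  have hmul : u l * ((1:ℝ≥0∞) - 12⁻¹ * S) = 1 := by
    rw [hu]
    exact ENNReal.inv_mul_cancel hne0 hTne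
  have ht := congrArg ENNReal.toReal hmul
  rw [ENNReal.toReal_mul, ENNReal.toReal_one,
    ENNReal.toReal_sub_of_le hlt ENNReal.one_ne_top, ENNReal.toReal_one,
    ENNReal.toReal_mul] at ht
  have h12 : ((12:ℝ≥0∞)⁻¹).toReal = (12:ℝ)⁻¹ := by
    rw [ENNReal.toReal_inv]; norm_num
  rw [h12] at ht
  have hSt : S.toReal = v (l-1) + v l + v (l+1) := by
    simp only [hS]
    rw [ENNReal.toReal_add (ENNReal.add_ne_top.2 ⟨u_ne_top _, u_ne_top _⟩) (u_ne_top _),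
      ENNReal.toReal_add (u_ne_top _) (u_ne_top _)]
    rfl
  rw [hSt] at ht
  simp only [v] at ht ⊢
  linear_combination (12:ℝ) * ht

lemma seq_zero (e : ℕ → ℝ) (h0 : e 0 = 0) (hnn : ∀ n, 0 ≤ e n) (hb : ∀ n, e n ≤ 2)
    (hc : ∀ n, 2 * e (n+1) ≤ e n + e (n+2)) : ∀ n, e n = 0 := by
  have hmono : ∀ m n' : ℕ, m ≤ n' → e (m+1) - e m ≤ e (n'+1) - e n' := by
    intro m n' hmn
    induction n', hmn using Nat.le_induction with
    | base => exact le_refl _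
    | succ n' hmn ih =>
        have := hc n'
        linarith
  have hδle : ∀ n, e (n+1) - e n ≤ 0 := by
    intro n
    by_contra hpos
    push_neg at hpos
    have grow : ∀ k : ℕ, e n + k * (e (n+1) - e n) ≤ e (n + k) := by
      intro k
      induction k with
      | zero => simp
      | succ k ih =>
          have h1 : e (n+1) - e n ≤ e ((n + k)+1) - e (n + k) := hmono n (n+k) (Nat.le_add_right n k)
          have hnk : (n + (k+1) : ℕ) = (n + k) + 1 := by omega
          rw [hnk]
          push_cast
          linarith
    obtain ⟨k, hk⟩ := exists_nat_gt ((2 - e n) / (e (n+1) - e n))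
    rw [div_lt_iff₀ hpos] at hk
    have hg := grow k
    have := hb (n + k)
    linarith
  have hdec : Antitone e := by
    apply antitone_nat_of_succ_le
    intro n
    have := hδle n
    linarith
  intro n
  have h1 : e n ≤ e 0 := hdec (Nat.zero_le n)
  have h2 := hnn n
  linarith

lemma u_eq_ofReal_g (l : ℤ) (hl : 1 ≤ l) : u l = ENNReal.ofReal (g l) := by
  set e : ℕ → ℝ := fun n => g (n:ℤ) - v (n:ℤ) with he
  have hzero : ∀ n, e n = 0 := by
    apply seq_zero
    · simp only [he]
      have h1 : g 0 = 0 := by unfold g; rw [if_neg (by omega)]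
      have h2 : u (0:ℤ) = 0 := u_eq_nonpos (by omega)
      simp [h1, v, h2]
    · intro n
      simp only [he]
      have := v_le_g (n:ℤ)
      linarith
    · intro n
      simp only [he]
      have := g_le_two (n:ℤ)
      have := v_nonneg (n:ℤ)
      linarith
    · intro n
      simp only [he]
      have hl1 : (0:ℤ) < (n:ℤ) + 1 := by omega
      have hv := v_fp hl1
      have hg := g_fp' (by omega : (1:ℤ) ≤ (n:ℤ) + 1)
      have c1 : ((n:ℤ) + 1 - 1 : ℤ) = (n:ℤ) := by ring
      have c2 : ((n:ℤ) + 1 + 1 : ℤ) = ((n+2 : ℕ) : ℤ) := by push_cast; ring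
      have c3 : (((n+1) : ℕ) : ℤ) = (n:ℤ) + 1 := by push_cast; ring
      rw [c1, c2] at hv hg
      rw [c3]
      have b1 : 0 ≤ g (n:ℤ) - v (n:ℤ) := by have := v_le_g (n:ℤ); linarith
      have b2 : 0 ≤ g ((n:ℤ)+1) - v ((n:ℤ)+1) := by have := v_le_g ((n:ℤ)+1); linarith
      have b3 : 0 ≤ g ((n+2:ℕ):ℤ) - v ((n+2:ℕ):ℤ) := by have := v_le_g ((n+2:ℕ):ℤ); linarith
      have b4 : g (n:ℤ) ≤ 2 := g_le_two _
      have b5 : g ((n:ℤ)+1) ≤ 2 := g_le_two _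
      have b6 : g ((n+2:ℕ):ℤ) ≤ 2 := g_le_two _
      have b7 : 0 ≤ v ((n:ℤ)+1) := v_nonneg _
      have b8 : v ((n:ℤ)+1) ≤ 2 := le_trans (v_le_g _) b5
      nlinarith [mul_nonneg b2 (by linarith : (0:ℝ) ≤ 6 - (g (n:ℤ) + g ((n:ℤ)+1) + g ((n+2:ℕ):ℤ))),
        mul_nonneg (by linarith : (0:ℝ) ≤ 2 - v ((n:ℤ)+1)) (by linarith : (0:ℝ) ≤ (g (n:ℤ) - v (n:ℤ)) + (g ((n:ℤ)+1) - v ((n:ℤ)+1)) + (g ((n+2:ℕ):ℤ) - v ((n+2:ℕ):ℤ)))]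
  have hn := hzero l.toNat
  have hcast : ((l.toNat : ℕ) : ℤ) = l := Int.toNat_of_nonneg (by omega)
  simp only [he, hcast] at hn
  have hvg : v l = g l := by linarith
  rw [← hvg, v, ENNReal.ofReal_toReal (u_ne_top l)]

end RhoAux4

/-- For every integer `l ≥ 1`, the `ρ_l`-probability that the minimal label is strictly
positive equals `l(l+3)/((l+1)(l+2))`. -/
theorem rho_minLabel_pos (l : ℤ) (hl : 1 ≤ l) :
    rho l {θ : LTree | 0 < θ.minLabel}
      = ENNReal.ofReal (((l : ℝ) * (l + 3)) / ((l + 1) * (l + 2))) := by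
  classical
  have hset : ({θ : LTree | θ.label = l ∧ θ.Valid} ∩ {θ : LTree | 0 < θ.minLabel})
      = {θ : LTree | θ.label = l ∧ θ.Valid ∧ 0 < θ.minLabel} := by
    ext θ
    simp [Set.mem_setOf_eq, and_assoc]
  have hrho : rho l {θ : LTree | 0 < θ.minLabel} = 2⁻¹ * RhoAux3.u l := by
    rw [rho, hset]
    have hpt : ∀ θ : LTree,
        Set.indicator {θ : LTree | θ.label = l ∧ θ.Valid ∧ 0 < θ.minLabel}
          (fun θ => (2:ℝ≥0∞)⁻¹ * (12:ℝ≥0∞)⁻¹ ^ θ.edges) θ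
        = 2⁻¹ * Set.indicator {θ : LTree | θ.label = l ∧ θ.Valid ∧ 0 < θ.minLabel} RhoAux.E θ :=
      fun θ => Set.indicator_const_mul _ _ _ θ
    rw [tsum_congr hpt, ENNReal.tsum_mul_left]
    rfl
  rw [hrho, RhoAux4.u_eq_ofReal_g l hl]
  have hg : RhoAux4.g l = 2*(l:ℝ)*((l:ℝ)+3)/(((l:ℝ)+1)*((l:ℝ)+2)) :=
    RhoAux4.g_formula (by omega)
  rw [hg]
  have heq : 2*(l:ℝ)*((l:ℝ)+3)/(((l:ℝ)+1)*((l:ℝ)+2))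
      = 2 * (((l:ℝ)*((l:ℝ)+3))/(((l:ℝ)+1)*((l:ℝ)+2))) := by ring
  rw [heq, ENNReal.ofReal_mul (by norm_num : (0:ℝ) ≤ 2)]
  rw [show ENNReal.ofReal (2:ℝ) = 2 from by norm_num]
  rw [← mul_assoc, ENNReal.inv_mul_cancel two_ne_zero ENNReal.ofNat_ne_top, one_mul]
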